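/- Multiplier bound underlying the X^{s,−3/8} estimate: for every s > 1/2 there is a constant C such that for all real numbers ξ₀, ξ₁, ξ₂, ξ₃ with ξ₀ − ξ₁ + ξ₂ − ξ₃ = 0, one has ⟨ξ₀⟩^{s} ⟨ξ₁⟩^{−s} ⟨ξ₂⟩^{1−s} ⟨ξ₃⟩^{−s} ⟨(ξ₀−ξ₁)(ξ₀−ξ₃)⟩^{−3/8} · ⟨ξ_mid⟩^{1/4} ⟨ξ_max⟩^{−1/4} ≤ C, where among the four numbers ξ₀, ξ₁, ξ₂, ξ₃ ordered by absolute value |ξ_min| ≤ |ξ_mid| ≤ |ξ_max1| ≤ |ξ_max|, ξ_max denotes one of largest absolute value and ξ_mid one of second-smallest absolute value. -/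
import Mathlib

open scoped ENNReal

noncomputable section

/-- The Japanese bracket `⟨x⟩ = (1+x²)^{1/2}`. -/
def jap (x : ℝ) : ℝ := Real.sqrt (1 + x ^ 2)

lemma jap_pos (x : ℝ) : 0 < jap x := Real.sqrt_pos.2 (by positivity)

lemma one_le_jap (x : ℝ) : 1 ≤ jap x := by
  rw [show (1:ℝ) = Real.sqrt 1 by simp]
  exact Real.sqrt_le_sqrt (by nlinarith [sq_nonneg x])

lemma log_jap_nonneg (x : ℝ) : 0 ≤ Real.log (jap x) :=
  Real.log_nonneg (one_le_jap x)

lemma jap_mono {x y : ℝ} (h : |x| ≤ |y|) : jap x ≤ jap y := by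
  apply Real.sqrt_le_sqrt
  nlinarith [sq_abs x, sq_abs y, abs_nonneg x]

lemma log_jap_mono {x y : ℝ} (h : |x| ≤ |y|) :
    Real.log (jap x) ≤ Real.log (jap y) :=
  Real.log_le_log (jap_pos x) (jap_mono h)

lemma jap_neg (x : ℝ) : jap (-x) = jap x := by unfold jap; ring_nf

lemma sqrt_four' : Real.sqrt 4 = 2 := by
  rw [show (4:ℝ) = 2^2 by norm_num, Real.sqrt_sq (by norm_num)]

lemma sqrt_le_two_sqrt_sqrt {u v w : ℝ} (hu : 0 ≤ u) (h : w ≤ 4 * u * v) :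
    Real.sqrt w ≤ 2 * Real.sqrt u * Real.sqrt v := by
  rw [show (2:ℝ) = Real.sqrt 4 from sqrt_four'.symm,
    ← Real.sqrt_mul (by norm_num : (0:ℝ) ≤ 4),
    ← Real.sqrt_mul (by positivity : (0:ℝ) ≤ 4 * u)]
  exact Real.sqrt_le_sqrt h

lemma jap_add_le (x y : ℝ) : jap (x + y) ≤ 2 * jap x * jap y := by
  apply sqrt_le_two_sqrt_sqrt (by positivity)
  nlinarith [sq_nonneg (x - y), sq_nonneg (x*y), sq_nonneg (x+y)]

lemma log_jap_add (x y : ℝ) :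
    Real.log (jap (x + y)) ≤ Real.log 2 + Real.log (jap x) + Real.log (jap y) := by
  have h := Real.log_le_log (jap_pos (x+y)) (jap_add_le x y)
  rwa [Real.log_mul (mul_pos two_pos (jap_pos x)).ne' (jap_pos y).ne',
    Real.log_mul (by norm_num) (jap_pos x).ne'] at h

lemma jap_mul_ge {a b : ℝ} (ha : 1 ≤ |a|) (hb : 1 ≤ |b|) :
    jap a * jap b ≤ 2 * jap (a * b) := by
  have ha2 : 1 ≤ a^2 := by nlinarith [sq_abs a, abs_nonneg a]
  have hb2 : 1 ≤ b^2 := by nlinarith [sq_abs b, abs_nonneg b]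
  have key : jap (a*b) * jap (a*b) ≥ (jap a * jap b) * (jap a * jap b) / 4 := by
    have e1 : jap a * jap a = 1 + a^2 := Real.mul_self_sqrt (by positivity)
    have e2 : jap b * jap b = 1 + b^2 := Real.mul_self_sqrt (by positivity)
    have e3 : jap (a*b) * jap (a*b) = 1 + (a*b)^2 := Real.mul_self_sqrt (by positivity)
    rw [e3, show (jap a * jap b) * (jap a * jap b) = (jap a * jap a) * (jap b * jap b) by ring,
      e1, e2]
    nlinarith
  nlinarith [jap_pos (a*b), jap_pos a, jap_pos b,
    mul_pos (jap_pos a) (jap_pos b)]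

lemma log_jap_mul_ge {a b : ℝ} (ha : 1 ≤ |a|) (hb : 1 ≤ |b|) :
    Real.log (jap a) + Real.log (jap b) ≤ Real.log 2 + Real.log (jap (a * b)) := by
  have h := Real.log_le_log (mul_pos (jap_pos a) (jap_pos b)) (jap_mul_ge ha hb)
  rwa [Real.log_mul (jap_pos a).ne' (jap_pos b).ne',
    Real.log_mul (by norm_num) (jap_pos (a*b)).ne'] at h

lemma log_jap_small {a : ℝ} (ha : |a| ≤ 1) : Real.log (jap a) ≤ Real.log 2 := by
  apply Real.log_le_log (jap_pos a)
  have h1 : a^2 ≤ 1 := by nlinarith [sq_abs a, abs_nonneg a]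
  calc jap a ≤ Real.sqrt 4 := Real.sqrt_le_sqrt (by linarith)
    _ = 2 := sqrt_four'


lemma countP_quad (p : ℝ → Prop) [DecidablePred p] (a b c d : ℝ) :
    Multiset.countP p ({a, b, c, d} : Multiset ℝ) =
      (if p a then 1 else 0) + (if p b then 1 else 0) +
      (if p c then 1 else 0) + (if p d then 1 else 0) := by
  simp only [Multiset.insert_eq_cons, ← Multiset.cons_zero, Multiset.countP_cons,
    Multiset.countP_zero]
  ring

lemma three_of_four {m x y M ξ₀ ξ₁ ξ₂ ξ₃ : ℝ}
    (hMS : ({x, m, y, M} : Multiset ℝ) = ({ξ₀, ξ₁, ξ₂, ξ₃} : Multiset ℝ))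
    (hmy : |m| ≤ |y|) (hyM : |y| ≤ |M|) :
    (|m| ≤ |ξ₁| ∧ |m| ≤ |ξ₂| ∧ |m| ≤ |ξ₃|) ∨
      (|m| ≤ |ξ₀| ∧ |m| ≤ |ξ₂| ∧ |m| ≤ |ξ₃|) ∨
      (|m| ≤ |ξ₀| ∧ |m| ≤ |ξ₁| ∧ |m| ≤ |ξ₃|) ∨
      (|m| ≤ |ξ₀| ∧ |m| ≤ |ξ₁| ∧ |m| ≤ |ξ₂|) := by
  classical
  have key : 3 ≤ Multiset.countP (fun z => |m| ≤ |z|) ({ξ₀, ξ₁, ξ₂, ξ₃} : Multiset ℝ) := by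
    rw [← hMS, countP_quad]
    have h1 : |m| ≤ |m| := le_refl _
    have h3 : |m| ≤ |M| := le_trans hmy hyM
    simp only [h1, hmy, h3, if_true]
    split_ifs <;> omega
  rw [countP_quad] at key
  by_cases h0 : |m| ≤ |ξ₀| <;> by_cases h1 : |m| ≤ |ξ₁| <;>
    by_cases h2 : |m| ≤ |ξ₂| <;> by_cases h3 : |m| ≤ |ξ₃| <;>
    simp only [h0, h1, h2, h3, if_true, if_false] at key <;>
    first
      | tauto
      | omega


/-- Multiplier bound underlying the `X^{s,-3/8}` estimate: for `s > 1/2` there is `C` such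
that for all `ξ₀ - ξ₁ + ξ₂ - ξ₃ = 0`,
`⟨ξ₀⟩^{s}⟨ξ₁⟩^{-s}⟨ξ₂⟩^{1-s}⟨ξ₃⟩^{-s}⟨(ξ₀-ξ₁)(ξ₀-ξ₃)⟩^{-3/8}⟨ξ_mid⟩^{1/4}⟨ξ_max⟩^{-1/4} ≤ C`,
where `ξ_max` is one of the four numbers of largest absolute value and `ξ_mid` one of
second-smallest absolute value. -/
theorem statement_17 (s : ℝ) (hs : 1/2 < s) :
    ∃ C : ℝ, 0 < C ∧
      ∀ ξ₀ ξ₁ ξ₂ ξ₃ m M x y : ℝ, ξ₀ - ξ₁ + ξ₂ - ξ₃ = 0 →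
        ({x, m, y, M} : Multiset ℝ) = ({ξ₀, ξ₁, ξ₂, ξ₃} : Multiset ℝ) →
        |x| ≤ |m| → |m| ≤ |y| → |y| ≤ |M| →
        jap ξ₀ ^ s * jap ξ₁ ^ (-s) * jap ξ₂ ^ (1 - s) * jap ξ₃ ^ (-s) *
            jap ((ξ₀ - ξ₁) * (ξ₀ - ξ₃)) ^ (-(3/8) : ℝ) *
            jap m ^ (1/4 : ℝ) * jap M ^ (-(1/4) : ℝ)
          ≤ C := by
  classical
  refine ⟨Real.exp (2*s + 9), Real.exp_pos _, ?_⟩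
  intro ξ₀ ξ₁ ξ₂ ξ₃ m M x y hsum hMS hxm hmy hyM
  have hc : Real.log 2 ≤ 1 := by
    have := Real.log_two_lt_d9
    linarith
  have hcpos : 0 ≤ Real.log 2 := Real.log_nonneg (by norm_num)
  -- abbreviations (pure notation via `have` equalities would break linarith atoms;
  -- we just use the raw terms everywhere)
  have hrw : jap ξ₀ ^ s * jap ξ₁ ^ (-s) * jap ξ₂ ^ (1 - s) * jap ξ₃ ^ (-s) *
      jap ((ξ₀ - ξ₁) * (ξ₀ - ξ₃)) ^ (-(3/8) : ℝ) *
      jap m ^ (1/4 : ℝ) * jap M ^ (-(1/4) : ℝ)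
      = Real.exp (Real.log (jap ξ₀) * s + Real.log (jap ξ₁) * (-s)
          + Real.log (jap ξ₂) * (1-s) + Real.log (jap ξ₃) * (-s)
          + Real.log (jap ((ξ₀ - ξ₁) * (ξ₀ - ξ₃))) * (-(3/8))
          + Real.log (jap m) * (1/4) + Real.log (jap M) * (-(1/4))) := by
    rw [Real.rpow_def_of_pos (jap_pos ξ₀), Real.rpow_def_of_pos (jap_pos ξ₁),
      Real.rpow_def_of_pos (jap_pos ξ₂), Real.rpow_def_of_pos (jap_pos ξ₃),
      Real.rpow_def_of_pos (jap_pos _), Real.rpow_def_of_pos (jap_pos m),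
      Real.rpow_def_of_pos (jap_pos M), ← Real.exp_add, ← Real.exp_add,
      ← Real.exp_add, ← Real.exp_add, ← Real.exp_add, ← Real.exp_add]
  rw [hrw, Real.exp_le_exp]
  have hn0p := log_jap_nonneg ξ₀
  have hn1p := log_jap_nonneg ξ₁
  have hn2p := log_jap_nonneg ξ₂
  have hn3p := log_jap_nonneg ξ₃
  have hαp := log_jap_nonneg (ξ₀ - ξ₁)
  have hβp := log_jap_nonneg (ξ₀ - ξ₃)
  have hLp := log_jap_nonneg ((ξ₀ - ξ₁) * (ξ₀ - ξ₃))
  have hqp := log_jap_nonneg m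
  -- constraints from a = ξ₀ - ξ₁ = ξ₃ - ξ₂
  have ha0 : Real.log (jap ξ₀) ≤ Real.log 2 + Real.log (jap ξ₁) + Real.log (jap (ξ₀ - ξ₁)) := by
    have h := log_jap_add ξ₁ (ξ₀ - ξ₁)
    rw [show ξ₁ + (ξ₀ - ξ₁) = ξ₀ by ring] at h
    linarith
  have ha1 : Real.log (jap ξ₁) ≤ Real.log 2 + Real.log (jap ξ₀) + Real.log (jap (ξ₀ - ξ₁)) := by
    have h := log_jap_add ξ₀ (-(ξ₀ - ξ₁))
    rw [show ξ₀ + -(ξ₀ - ξ₁) = ξ₁ by ring, jap_neg] at h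
    linarith
  have ha2 : Real.log (jap ξ₂) ≤ Real.log 2 + Real.log (jap ξ₃) + Real.log (jap (ξ₀ - ξ₁)) := by
    have h := log_jap_add ξ₃ (-(ξ₀ - ξ₁))
    rw [show ξ₃ + -(ξ₀ - ξ₁) = ξ₂ by linarith, jap_neg] at h
    linarith
  have ha3 : Real.log (jap ξ₃) ≤ Real.log 2 + Real.log (jap ξ₂) + Real.log (jap (ξ₀ - ξ₁)) := by
    have h := log_jap_add ξ₂ (ξ₀ - ξ₁)
    rw [show ξ₂ + (ξ₀ - ξ₁) = ξ₃ by linarith] at h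
    linarith
  -- constraints from b = ξ₀ - ξ₃ = ξ₁ - ξ₂
  have hb0 : Real.log (jap ξ₀) ≤ Real.log 2 + Real.log (jap ξ₃) + Real.log (jap (ξ₀ - ξ₃)) := by
    have h := log_jap_add ξ₃ (ξ₀ - ξ₃)
    rw [show ξ₃ + (ξ₀ - ξ₃) = ξ₀ by ring] at h
    linarith
  have hb3 : Real.log (jap ξ₃) ≤ Real.log 2 + Real.log (jap ξ₀) + Real.log (jap (ξ₀ - ξ₃)) := by
    have h := log_jap_add ξ₀ (-(ξ₀ - ξ₃))
    rw [show ξ₀ + -(ξ₀ - ξ₃) = ξ₃ by ring, jap_neg] at h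
    linarith
  have hb1 : Real.log (jap ξ₁) ≤ Real.log 2 + Real.log (jap ξ₂) + Real.log (jap (ξ₀ - ξ₃)) := by
    have h := log_jap_add ξ₂ (ξ₀ - ξ₃)
    rw [show ξ₂ + (ξ₀ - ξ₃) = ξ₁ by linarith] at h
    linarith
  have hb2 : Real.log (jap ξ₂) ≤ Real.log 2 + Real.log (jap ξ₁) + Real.log (jap (ξ₀ - ξ₃)) := by
    have h := log_jap_add ξ₁ (-(ξ₀ - ξ₃))
    rw [show ξ₁ + -(ξ₀ - ξ₃) = ξ₂ by linarith, jap_neg] at h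
    linarith
  -- α is controlled by n2, n3
  have hα23 : Real.log (jap (ξ₀ - ξ₁)) ≤ Real.log 2 + Real.log (jap ξ₃) + Real.log (jap ξ₂) := by
    have h := log_jap_add ξ₃ (-ξ₂)
    rw [show ξ₃ + -ξ₂ = ξ₀ - ξ₁ by linarith, jap_neg] at h
    linarith
  -- the s-dependent part
  have hσ : (s - 1/2) * (Real.log (jap ξ₀) - Real.log (jap ξ₁) - Real.log (jap ξ₂)
        - Real.log (jap ξ₃)) ≤ (s - 1/2) * 2 := by
    apply mul_le_mul_of_nonneg_left _ (by linarith)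
    linarith
  -- all |ξᵢ| ≤ |M|
  have hmem : ∀ z : ℝ, z ∈ ({ξ₀, ξ₁, ξ₂, ξ₃} : Multiset ℝ) → |z| ≤ |M| := by
    intro z hz
    rw [← hMS] at hz
    simp only [Multiset.insert_eq_cons, Multiset.mem_cons, Multiset.mem_singleton] at hz
    rcases hz with h|h|h|h <;> subst h
    · linarith
    · linarith
    · linarith
    · linarith
  have hμ0 : Real.log (jap ξ₀) ≤ Real.log (jap M) := log_jap_mono (hmem ξ₀ (by simp))
  have hμ1 : Real.log (jap ξ₁) ≤ Real.log (jap M) := log_jap_mono (hmem ξ₁ (by simp))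
  have hμ2 : Real.log (jap ξ₂) ≤ Real.log (jap M) := log_jap_mono (hmem ξ₂ (by simp))
  have hμ3 : Real.log (jap ξ₃) ≤ Real.log (jap M) := log_jap_mono (hmem ξ₃ (by simp))
  have hqμ : Real.log (jap m) ≤ Real.log (jap M) := log_jap_mono (le_trans hmy hyM)
  have hq3 := three_of_four hMS hmy hyM
  -- main case split
  by_cases hA : |ξ₀ - ξ₁| ≤ 1
  · have hαs : Real.log (jap (ξ₀ - ξ₁)) ≤ Real.log 2 := log_jap_small hA
    linarith
  by_cases hB : |ξ₀ - ξ₃| ≤ 1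
  · have hβs : Real.log (jap (ξ₀ - ξ₃)) ≤ Real.log 2 := log_jap_small hB
    linarith
  push_neg at hA hB
  have hLab : Real.log (jap (ξ₀ - ξ₁)) + Real.log (jap (ξ₀ - ξ₃)) ≤
      Real.log 2 + Real.log (jap ((ξ₀ - ξ₁) * (ξ₀ - ξ₃))) := log_jap_mul_ge hA.le hB.le
  rcases hq3 with ⟨hm1, hm2, hm3⟩ | ⟨hm0, hm2, hm3⟩ | ⟨hm0, hm1, hm3⟩ | ⟨hm0, hm1, hm2⟩
  · have k1 := log_jap_mono hm1
    have k2 := log_jap_mono hm2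
    have k3 := log_jap_mono hm3
    linarith
  · have k0 := log_jap_mono hm0
    have k2 := log_jap_mono hm2
    have k3 := log_jap_mono hm3
    linarith
  · have k0 := log_jap_mono hm0
    have k1 := log_jap_mono hm1
    have k3 := log_jap_mono hm3
    linarith
  · have k0 := log_jap_mono hm0
    have k1 := log_jap_mono hm1
    have k2 := log_jap_mono hm2
    linarith
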